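/- arXiv:2202.04794 — 6 statements merged into one kernel-verified Lean document; each statement's English description precedes it below -/
import Mathlib

section
/- Let K be a field and let α₁,...,α₆ ∈ K² be pairwise linearly independent vectors (written as columns of 2×2 determinants |αᵢαⱼ|). Then there exist nonzero scalars c₁,...,c₆ ∈ K satisfying c₄α₄ = c₂α₂ − c₃α₃, c₅α₅ = c₃α₃ − c₁α₁, and c₆α₆ = c₁α₁ − c₂α₂ if and only if |α₁α₅||α₂α₆||α₃α₄| = |α₁α₆||α₂α₄||α₃α₅|. -/
/-!
Taking `det2 · α₄` of `c₄α₄ = c₂α₂ − c₃α₃` (and similarly for the other two relations) gives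
`c₂|α₂α₄| = c₃|α₃α₄|`, `c₃|α₃α₅| = c₁|α₁α₅|`, `c₁|α₁α₆| = c₂|α₂α₆|`; multiplying them and
cancelling `c₁c₂c₃` yields the determinant identity. Conversely, a combination `xu − yv` is a
multiple of `w` exactly when `det2 (xu − yv) w = 0`, so it suffices to choose `c₁, c₂, c₃` solving
the three linear relations, which is possible precisely when the identity holds.
-/

/-- The 2×2 determinant with columns `a`, `b` in `K²`. -/
def det2 {K : Type*} [Field K] (a b : K × K) : K := a.1 * b.2 - a.2 * b.1

section det2

variable {K : Type*} [Field K]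

@[simp]
lemma det2_smul_left (z : K) (a b : K × K) : det2 (z • a) b = z * det2 a b := by
  simp only [det2, Prod.smul_fst, Prod.smul_snd, smul_eq_mul]; ring

@[simp]
lemma det2_sub_left (a b c : K × K) : det2 (a - b) c = det2 a c - det2 b c := by
  simp only [det2, Prod.fst_sub, Prod.snd_sub]; ring

@[simp]
lemma det2_self (a : K × K) : det2 a a = 0 := by
  simp only [det2]; ring

lemma det2_comm (a b : K × K) : det2 a b = -det2 b a := by
  simp only [det2]; ring

lemma det2_smul_eq_add (a b c : K × K) : det2 a b • c = det2 c b • a + det2 a c • b := by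
  ext <;> simp only [det2, Prod.smul_fst, Prod.smul_snd, Prod.fst_add, Prod.snd_add,
    smul_eq_mul] <;> ring

lemma eq_smul_of_det2_eq_zero {p w : K × K} (u : K × K) (hp : det2 p w = 0)
    (huw : det2 u w ≠ 0) : p = (det2 u p / det2 u w) • w := by
  have := det2_smul_eq_add u w p
  rw [hp, zero_smul, zero_add] at this
  rw [div_eq_inv_mul, mul_smul, ← this, smul_smul, inv_mul_cancel₀ huw, one_smul]

lemma det2_eq_of_smul_eq_sub {u v w : K × K} {x y z : K} (h : z • w = x • u - y • v) :
    x * det2 u w = y * det2 v w := by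
  have := congrArg (det2 · w) h
  simp only [det2_smul_left, det2_self, mul_zero, det2_sub_left] at this
  linear_combination -this

lemma exists_smul_eq_sub_of_det2_eq {u v w : K × K} {x y : K} (huv : det2 u v ≠ 0)
    (huw : det2 u w ≠ 0) (hy : y ≠ 0) (h : x * det2 u w = y * det2 v w) :
    ∃ z : K, z ≠ 0 ∧ z • w = x • u - y • v := by
  have hp : det2 (x • u - y • v) w = 0 := by
    simp only [det2_sub_left, det2_smul_left]; linear_combination h
  refine ⟨det2 u (x • u - y • v) / det2 u w, ?_, (eq_smul_of_det2_eq_zero u hp huw).symm⟩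
  have : det2 u (x • u - y • v) = -(y * det2 u v) := by
    rw [det2_comm, det2_sub_left, det2_smul_left, det2_smul_left, det2_self, det2_comm v u]; ring
  rw [this]
  exact div_ne_zero (neg_ne_zero.mpr (mul_ne_zero hy huv)) huw

end det2

/-- The paper's `αᵢ`, `cᵢ` are `α (i - 1)`, `c (i - 1)`. -/
theorem stmt0 {K : Type*} [Field K] (α : Fin 6 → K × K)
    (hindep : ∀ i j : Fin 6, i ≠ j → det2 (α i) (α j) ≠ 0) :
    (∃ c : Fin 6 → K, (∀ i, c i ≠ 0) ∧
      c 3 • α 3 = c 1 • α 1 - c 2 • α 2 ∧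
      c 4 • α 4 = c 2 • α 2 - c 0 • α 0 ∧
      c 5 • α 5 = c 0 • α 0 - c 1 • α 1) ↔
    det2 (α 0) (α 4) * det2 (α 1) (α 5) * det2 (α 2) (α 3)
      = det2 (α 0) (α 5) * det2 (α 1) (α 3) * det2 (α 2) (α 4) := by
  constructor
  · rintro ⟨c, hc, h3, h4, h5⟩
    have e3 := det2_eq_of_smul_eq_sub h3
    have e4 := det2_eq_of_smul_eq_sub h4
    have e5 := det2_eq_of_smul_eq_sub h5
    apply mul_left_cancel₀ (mul_ne_zero (mul_ne_zero (hc 0) (hc 1)) (hc 2))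
    linear_combination -(c 2 * det2 (α 2) (α 4) * c 0 * det2 (α 0) (α 5)) * e3
      - (c 2 * det2 (α 2) (α 3) * c 0 * det2 (α 0) (α 5)) * e4
      - (c 2 * det2 (α 2) (α 3) * c 0 * det2 (α 0) (α 4)) * e5
  · intro hd
    have d (i j : Fin 6) (h : i ≠ j := by decide) := hindep i j h
    have hc0 := mul_ne_zero (d 1 5) (d 2 4)
    have hc1 := mul_ne_zero (d 0 5) (d 2 4)
    have hc2 := mul_ne_zero (d 1 5) (d 0 4)
    obtain ⟨c3, hc3, h3⟩ := exists_smul_eq_sub_of_det2_eq (d 1 2) (d 1 3) hc2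
      (x := det2 (α 0) (α 5) * det2 (α 2) (α 4)) (by linear_combination -hd)
    obtain ⟨c4, hc4, h4⟩ := exists_smul_eq_sub_of_det2_eq (d 2 0) (d 2 4) hc0
      (x := det2 (α 1) (α 5) * det2 (α 0) (α 4)) (by ring)
    obtain ⟨c5, hc5, h5⟩ := exists_smul_eq_sub_of_det2_eq (d 0 1) (d 0 5) hc1
      (x := det2 (α 1) (α 5) * det2 (α 2) (α 4)) (by ring)
    refine ⟨![_, _, _, c3, c4, c5], ?_, h3, h4, h5⟩
    intro i
    fin_cases i <;> assumption
end

section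
/- Let K be a field and let λ₄, λ₅, λ₆ ∈ K∖{0,1} be pairwise distinct. Set α₁=(1,0), α₂=(0,1), α₃=(1,1), αⱼ=(λⱼ,1) for j=4,5,6. Then the following are equivalent: (a) (1−λ₅)λ₄ = (1−λ₄)λ₆; (b) the three equations [α₄,α₅;α₆,α₁]=λ₄, [α₄,α₅;α₆,α₂]=λ₅, [α₄,α₅;α₆,α₃]=λ₆ all hold, where [v₁,v₂;v₃,v₄]=|v₁v₃||v₂v₄|/(|v₂v₃||v₁v₄|). -/
/-- The cross ratio `[v₁,v₂;v₃,v₄] = |v₁v₃||v₂v₄| / (|v₂v₃||v₁v₄|)`. -/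
def crossRatio {K : Type*} [Field K] (v1 v2 v3 v4 : K × K) : K :=
  det2 v1 v3 * det2 v2 v4 / (det2 v2 v3 * det2 v1 v4)

section AffineCrossRatio

variable {K : Type*} [Field K] (a b c : K)

theorem crossRatio_affine (x y : K) :
    crossRatio (a, 1) (b, 1) (c, 1) (x, y) = (a - c) / (b - c) * ((b * y - x) / (a * y - x)) := by
  simp only [crossRatio, det2, mul_one, one_mul, div_mul_div_comm]

theorem crossRatio_affine_one_zero :
    crossRatio (a, 1) (b, 1) (c, 1) ((1 : K), (0 : K)) = (a - c) / (b - c) := by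
  simp [crossRatio_affine]

theorem crossRatio_affine_zero_one :
    crossRatio (a, 1) (b, 1) (c, 1) ((0 : K), (1 : K)) =
      crossRatio (a, 1) (b, 1) (c, 1) ((1 : K), (0 : K)) * b / a := by
  rw [crossRatio_affine, crossRatio_affine_one_zero, mul_div_assoc]
  simp only [mul_one, sub_zero]

theorem crossRatio_affine_one_one :
    crossRatio (a, 1) (b, 1) (c, 1) ((1 : K), (1 : K)) =
      crossRatio (a, 1) (b, 1) (c, 1) ((1 : K), (0 : K)) * (b - 1) / (a - 1) := by
  rw [crossRatio_affine, crossRatio_affine_one_zero, mul_div_assoc]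
  simp only [mul_one]

variable {a b c}

theorem crossRatio_affine_one_zero_eq_iff (hbc : b ≠ c) :
    crossRatio (a, 1) (b, 1) (c, 1) ((1 : K), (0 : K)) = a ↔ (1 - b) * a = (1 - a) * c := by
  rw [crossRatio_affine_one_zero, div_eq_iff (sub_ne_zero.mpr hbc)]
  constructor <;> intro h <;> linear_combination h

end AffineCrossRatio

theorem stmt3_general {K : Type*} [Field K] (l4 l5 l6 : K)
    (h40 : l4 ≠ 0) (h41 : l4 ≠ 1)
    (h56 : l5 ≠ l6) :
    (1 - l5) * l4 = (1 - l4) * l6 ↔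
      (crossRatio (l4, 1) (l5, 1) (l6, 1) ((1 : K), (0 : K)) = l4 ∧
       crossRatio (l4, 1) (l5, 1) (l6, 1) ((0 : K), (1 : K)) = l5 ∧
       crossRatio (l4, 1) (l5, 1) (l6, 1) ((1 : K), (1 : K)) = l6) := by
  rw [crossRatio_affine_zero_one, crossRatio_affine_one_one]
  constructor
  · intro h
    have h1 := (crossRatio_affine_one_zero_eq_iff h56).mpr h
    refine ⟨h1, ?_, ?_⟩ <;> rw [h1]
    · exact mul_div_cancel_left₀ l5 h40
    · rw [div_eq_iff (sub_ne_zero.mpr h41)]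
      linear_combination -h
  · exact fun ⟨h1, _⟩ => (crossRatio_affine_one_zero_eq_iff h56).mp h1

/-- With α₁=(1,0), α₂=(0,1), α₃=(1,1), αⱼ=(λⱼ,1) for j=4,5,6 and λ₄,λ₅,λ₆ ∈ K∖{0,1}
pairwise distinct, the condition (1−λ₅)λ₄ = (1−λ₄)λ₆ is equivalent to the three
cross-ratio equations [α₄,α₅;α₆,α₁]=λ₄, [α₄,α₅;α₆,α₂]=λ₅, [α₄,α₅;α₆,α₃]=λ₆. -/
theorem stmt3 {K : Type*} [Field K] (l4 l5 l6 : K)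
    (h40 : l4 ≠ 0) (h41 : l4 ≠ 1) (h50 : l5 ≠ 0) (h51 : l5 ≠ 1)
    (h60 : l6 ≠ 0) (h61 : l6 ≠ 1)
    (h45 : l4 ≠ l5) (h46 : l4 ≠ l6) (h56 : l5 ≠ l6) :
    (1 - l5) * l4 = (1 - l4) * l6 ↔
      (crossRatio (l4, 1) (l5, 1) (l6, 1) ((1 : K), (0 : K)) = l4 ∧
       crossRatio (l4, 1) (l5, 1) (l6, 1) ((0 : K), (1 : K)) = l5 ∧
       crossRatio (l4, 1) (l5, 1) (l6, 1) ((1 : K), (1 : K)) = l6) :=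
  stmt3_general l4 l5 l6 h40 h41 h56
end

section
/- Let K be a field of characteristic ≠ 2 and let α₁,...,α₆ ∈ K³ be vectors, any three of which are linearly independent. For each pair {p,q}, let α_p × α_q denote the cross product. Suppose det(α₁×α₂, α₃×α₄, α₅×α₆) = 0 and det(α₁×α₆, α₂×α₃, α₄×α₅) = 0. Then det(α₁×α₄, α₂×α₅, α₃×α₆) = 0. -/
/-!
The three determinants of the statement sum to zero identically, as polynomials in the
eighteen coordinates of `α`, so any two of them vanishing forces the third.
-/

/-- The 3×3 determinant with columns `a`, `b`, `c` in `K³`. -/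
def det3 {K : Type*} [Field K] (a b c : Fin 3 → K) : K :=
  a 0 * (b 1 * c 2 - b 2 * c 1) - a 1 * (b 0 * c 2 - b 2 * c 0)
    + a 2 * (b 0 * c 1 - b 1 * c 0)

/-- The cross product on `K³`. -/
def cross3 {K : Type*} [Field K] (a b : Fin 3 → K) : Fin 3 → K :=
  ![a 1 * b 2 - a 2 * b 1, a 2 * b 0 - a 0 * b 2, a 0 * b 1 - a 1 * b 0]

theorem det3_cross3_pappus_sum {K : Type*} [Field K] (a b c d e f : Fin 3 → K) :
    det3 (cross3 a b) (cross3 c d) (cross3 e f) + det3 (cross3 a f) (cross3 b c) (cross3 d e)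
      + det3 (cross3 a d) (cross3 b e) (cross3 c f) = 0 := by
  simp only [det3, cross3, Matrix.cons_val_zero, Matrix.cons_val_one, Matrix.cons_val_two,
    Matrix.head_cons, Matrix.tail_cons]
  ring

theorem stmt10_general {K : Type*} [Field K] (α : Fin 6 → Fin 3 → K)
    (h1 : det3 (cross3 (α 0) (α 1)) (cross3 (α 2) (α 3)) (cross3 (α 4) (α 5)) = 0)
    (h6 : det3 (cross3 (α 0) (α 5)) (cross3 (α 1) (α 2)) (cross3 (α 3) (α 4)) = 0) :
    det3 (cross3 (α 0) (α 3)) (cross3 (α 1) (α 4)) (cross3 (α 2) (α 5)) = 0 := by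
  linear_combination det3_cross3_pappus_sum (α 0) (α 1) (α 2) (α 3) (α 4) (α 5) - h1 - h6

/-- Pappus' theorem in cross-product form: for α₁,...,α₆ ∈ K³ (char K ≠ 2), any
three of which are linearly independent, if det(α₁×α₂, α₃×α₄, α₅×α₆) = 0 and
det(α₁×α₆, α₂×α₃, α₄×α₅) = 0 then det(α₁×α₄, α₂×α₅, α₃×α₆) = 0.
(Indices shifted: αᵢ is `α (i-1)`.) -/
theorem stmt10 {K : Type*} [Field K] (h2 : (2 : K) ≠ 0) (α : Fin 6 → Fin 3 → K)
    (hindep : ∀ i j k : Fin 6, i ≠ j → i ≠ k → j ≠ k →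
      det3 (α i) (α j) (α k) ≠ 0)
    (h1 : det3 (cross3 (α 0) (α 1)) (cross3 (α 2) (α 3)) (cross3 (α 4) (α 5)) = 0)
    (h6 : det3 (cross3 (α 0) (α 5)) (cross3 (α 1) (α 2)) (cross3 (α 3) (α 4)) = 0) :
    det3 (cross3 (α 0) (α 3)) (cross3 (α 1) (α 4)) (cross3 (α 2) (α 5)) = 0 :=
  stmt10_general α h1 h6
end

section
/- Let K be a field of characteristic 0 and w,x,y,z ∈ K with w,x,y,z ∉ {0,1}, w≠x, w≠y, x≠z, y≠z, wz≠xy, and w−x−y+z−wz+xy ≠ 0. Then the system x−y = 0, xy + z = 0, xy − x + z − y = 0 has no solution. (Equivalently: there is no type 2³ arrangement of 6 planes over a characteristic 0 field.) -/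
theorem two_mul_eq_zero_of_collinearity {R : Type*} [CommRing R] {x y z : R}
    (h₁ : x - y = 0) (h₂ : x * y + z = 0) (h₃ : x * y - x + z - y = 0) : 2 * x = 0 := by
  linear_combination h₁ + h₂ - h₃

theorem stmt12_general {K : Type*} [Field K] [CharZero K] (x y z : K)
    (hx0 : x ≠ 0) :
    ¬(x - y = 0 ∧ x * y + z = 0 ∧ x * y - x + z - y = 0) := by
  rintro ⟨h₁, h₂, h₃⟩
  have h2x : 2 * x = 0 := two_mul_eq_zero_of_collinearity h₁ h₂ h₃
  exact hx0 ((mul_eq_zero.mp h2x).resolve_left two_ne_zero)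

/-- No type 2³ arrangement of 6 planes exists over a field of characteristic 0:
the three collinearity conditions x−y = 0, xy+z = 0, xy−x+z−y = 0 are
incompatible with the genericity constraints. -/
theorem stmt12 {K : Type*} [Field K] [CharZero K] (w x y z : K)
    (hw0 : w ≠ 0) (hw1 : w ≠ 1) (hx0 : x ≠ 0) (hx1 : x ≠ 1)
    (hy0 : y ≠ 0) (hy1 : y ≠ 1) (hz0 : z ≠ 0) (hz1 : z ≠ 1)
    (hwx : w ≠ x) (hwy : w ≠ y) (hxz : x ≠ z) (hyz : y ≠ z)
    (hdet : w * z ≠ x * y) (hlast : w - x - y + z - w * z + x * y ≠ 0) :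
    ¬(x - y = 0 ∧ x * y + z = 0 ∧ x * y - x + z - y = 0) :=
  stmt12_general x y z hx0
end

section
/- Let K = ℚ(√5) (or any field containing a root ξ of X²+X−1). Set x = ξ, y = x, w = z = x², with α₁=(1,0,0), α₂=(0,1,0), α₃=(0,0,1), α₄=(1,1,1), α₅=(w,x,1), α₆=(y,z,1). Then all of the following vanish: det(α₁×α₅,α₂×α₆,α₃×α₄), det(α₁×α₂,α₃×α₅,α₄×α₆), det(α₁×α₅,α₂×α₄,α₃×α₆), det(α₁×α₄,α₂×α₆,α₃×α₅); moreover x, x² ∉ {0,1}, x² ≠ x, x²·x² ≠ x·x, and x²−x−x+x²−x⁴+x² ≠ 0. -/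
/-- Realization of the type 1¹5¹ arrangement over a field containing a root ξ of
X²+X−1: with x = y = ξ, w = z = ξ², the four collinearity determinants vanish
and the relevant genericity conditions hold. -/
theorem stmt13 {K : Type*} [Field K] (ξ : K) (hξ : ξ ^ 2 + ξ - 1 = 0)
    (x w y z : K) (hx : x = ξ) (hy : y = x) (hw : w = x ^ 2) (hz : z = x ^ 2)
    (α : Fin 6 → Fin 3 → K)
    (hα : α = ![![1, 0, 0], ![0, 1, 0], ![0, 0, 1], ![1, 1, 1],
      ![w, x, 1], ![y, z, 1]]) :
    det3 (cross3 (α 0) (α 4)) (cross3 (α 1) (α 5)) (cross3 (α 2) (α 3)) = 0 ∧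
    det3 (cross3 (α 0) (α 1)) (cross3 (α 2) (α 4)) (cross3 (α 3) (α 5)) = 0 ∧
    det3 (cross3 (α 0) (α 4)) (cross3 (α 1) (α 3)) (cross3 (α 2) (α 5)) = 0 ∧
    det3 (cross3 (α 0) (α 3)) (cross3 (α 1) (α 5)) (cross3 (α 2) (α 4)) = 0 ∧
    x ≠ 0 ∧ x ≠ 1 ∧ x ^ 2 ≠ 0 ∧ x ^ 2 ≠ 1 ∧ x ^ 2 ≠ x ∧
    x ^ 2 * x ^ 2 ≠ x * x ∧
    x ^ 2 - x - x + x ^ 2 - x ^ 4 + x ^ 2 ≠ 0 := by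
  subst hz hw hy hx hα
  have e0 : (![![1, 0, 0], ![0, 1, 0], ![0, 0, 1], ![1, 1, 1],
      ![y ^ 2, y, 1], ![y, y ^ 2, 1]] : Fin 6 → Fin 3 → K) 0 = ![1,0,0] := rfl
  have e1 : (![![1, 0, 0], ![0, 1, 0], ![0, 0, 1], ![1, 1, 1],
      ![y ^ 2, y, 1], ![y, y ^ 2, 1]] : Fin 6 → Fin 3 → K) 1 = ![0,1,0] := rfl
  have e2 : (![![1, 0, 0], ![0, 1, 0], ![0, 0, 1], ![1, 1, 1],
      ![y ^ 2, y, 1], ![y, y ^ 2, 1]] : Fin 6 → Fin 3 → K) 2 = ![0,0,1] := rfl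
  have e3 : (![![1, 0, 0], ![0, 1, 0], ![0, 0, 1], ![1, 1, 1],
      ![y ^ 2, y, 1], ![y, y ^ 2, 1]] : Fin 6 → Fin 3 → K) 3 = ![1,1,1] := rfl
  have e4 : (![![1, 0, 0], ![0, 1, 0], ![0, 0, 1], ![1, 1, 1],
      ![y ^ 2, y, 1], ![y, y ^ 2, 1]] : Fin 6 → Fin 3 → K) 4 = ![y ^ 2, y, 1] := rfl
  have e5 : (![![1, 0, 0], ![0, 1, 0], ![0, 0, 1], ![1, 1, 1],
      ![y ^ 2, y, 1], ![y, y ^ 2, 1]] : Fin 6 → Fin 3 → K) 5 = ![y, y ^ 2, 1] := rfl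
  have hx0 : y ≠ 0 := by rintro rfl; simp at hξ
  have hx1 : y ≠ 1 := by rintro rfl; norm_num at hξ
  refine ⟨?_, ?_, ?_, ?_, hx0, hx1, pow_ne_zero 2 hx0, ?_, ?_, ?_, ?_⟩
  · rw [e0, e1, e2, e3, e4, e5]; simp [det3, cross3]
  · rw [e0, e1, e2, e3, e4, e5]; simp [det3, cross3]
    linear_combination (y ^ 2 - y) * hξ
  · rw [e0, e1, e2, e3, e4, e5]; simp [det3, cross3]; ring
  · rw [e0, e1, e2, e3, e4, e5]; simp [det3, cross3]; ring
  · intro h; exact hx0 (by linear_combination hξ - h)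
  · intro h
    exact hx1 (mul_left_cancel₀ hx0 (by linear_combination h : y * y = y * 1))
  · intro h
    have h2 : y * y * (y * y) = y * y * 1 := by linear_combination h
    have h3 : y * y = 1 := mul_left_cancel₀ (mul_ne_zero hx0 hx0) h2
    rcases mul_self_eq_one_iff.mp h3 with h1 | h1
    · exact hx1 h1
    · exact hx0 (by linear_combination hξ + (1 - y) * h1)
  · intro h
    have h2 : 1 - 2 * y = 0 := by linear_combination h + (y ^ 2 - y - 1) * hξ
    have : (1 : K) = 0 := by linear_combination (-4) * hξ - (2 * y + 3) * h2
    exact one_ne_zero this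
end

section
/- Let K be a field of characteristic 2 containing an element ω with ω² + ω + 1 = 0 (e.g. K = 𝔽₄). Set α₁=(1,0,0), α₂=(0,1,0), α₃=(0,0,1), α₄=(1,1,1), α₅=(ω,ω²,1), α₆=(ω²,ω,1) in K³. Then any three of α₁,...,α₆ are linearly independent, and for every partition of {1,...,6} into three pairs {p₁,p₂},{p₃,p₄},{p₅,p₆}, we have det(α_{p₁}×α_{p₂}, α_{p₃}×α_{p₄}, α_{p₅}×α_{p₆}) = 0 — i.e. all 15 collinearity conditions hold. -/
/-!
Every determinant in the statement is a polynomial expression in `ω` over the prime field, so it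
suffices to check the claims in `𝔽₄ = 𝔽₂[ω]/(ω² + ω + 1)` and transport them along the embedding
`𝔽₄ → K` determined by `ω`; being injective, it preserves non-vanishing too. In `𝔽₄` the claims
are a finite check.
-/

section RingHom

variable {K L : Type*} [Field K] [Field L] (f : K →+* L)

theorem RingHom.map_det3 (a b c : Fin 3 → K) :
    f (det3 a b c) = det3 (f ∘ a) (f ∘ b) (f ∘ c) := by
  simp [det3]

theorem RingHom.comp_cross3 (a b : Fin 3 → K) :
    f ∘ cross3 a b = cross3 (f ∘ a) (f ∘ b) := by
  ext m
  fin_cases m <;> simp [cross3]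

end RingHom

/-- Over `𝔽₄` these six points of the projective plane form a hyperoval: a conic together with
its nucleus. -/
def hyperoval {K : Type*} [Semiring K] (ω : K) : Fin 6 → Fin 3 → K :=
  ![![1, 0, 0], ![0, 1, 0], ![0, 0, 1], ![1, 1, 1], ![ω, ω ^ 2, 1], ![ω ^ 2, ω, 1]]

theorem RingHom.comp_hyperoval {K L : Type*} [Semiring K] [Semiring L] (f : K →+* L) (ω : K)
    (i : Fin 6) : f ∘ hyperoval ω i = hyperoval (f ω) i := by
  ext m
  fin_cases i <;> fin_cases m <;> simp [hyperoval]

/-- `𝔽₄`, with `QuadraticAlgebra.omega` satisfying `ω² = 1 + ω`. -/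
abbrev F4 := QuadraticAlgebra (ZMod 2) 1 1

-- `X² + X + 1` has no root in `𝔽₂`; this is what makes `F4` a field.
instance : Fact (∀ r : ZMod 2, r ^ 2 ≠ 1 + 1 * r) := ⟨by decide⟩

namespace F4

theorem det3_hyperoval_ne_zero : ∀ i j k : Fin 6, i ≠ j → i ≠ k → j ≠ k →
    det3 (hyperoval (.omega : F4) i) (hyperoval .omega j) (hyperoval .omega k) ≠ 0 := by
  decide

set_option synthInstance.maxSize 1024 in
theorem det3_cross3_hyperoval_eq_zero {v : Fin 6 → Fin 6} (hv : v.Injective) :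
    det3 (cross3 (hyperoval (.omega : F4) (v 0)) (hyperoval .omega (v 1)))
      (cross3 (hyperoval .omega (v 2)) (hyperoval .omega (v 3)))
      (cross3 (hyperoval .omega (v 4)) (hyperoval .omega (v 5))) = 0 := by
  -- Each distinctness hypothesis comes right after its variable, so `decide` prunes to 720 cases.
  have distinct : ∀ a b : Fin 6, b ≠ a →
      ∀ c, c ≠ a → c ≠ b →
      ∀ d, d ≠ a → d ≠ b → d ≠ c →
      ∀ e, e ≠ a → e ≠ b → e ≠ c → e ≠ d →
      ∀ f, f ≠ a → f ≠ b → f ≠ c → f ≠ d → f ≠ e →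
        det3 (cross3 (hyperoval (.omega : F4) a) (hyperoval .omega b))
          (cross3 (hyperoval .omega c) (hyperoval .omega d))
          (cross3 (hyperoval .omega e) (hyperoval .omega f)) = 0 := by
    decide
  have ne {i j : Fin 6} (h : i ≠ j := by decide) : v i ≠ v j := hv.ne h
  exact distinct _ _ ne _ ne ne _ ne ne ne _ ne ne ne ne _ ne ne ne ne ne

variable {K : Type*} [Field K] [CharP K 2] {ω : K}

def embedding (hω : ω ^ 2 + ω + 1 = 0) : F4 →+* K :=
  letI := ZMod.algebra K 2
  (QuadraticAlgebra.lift ⟨ω, by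
    rw [one_smul, one_smul]; linear_combination hω - (ω + 1) * (CharTwo.two_eq_zero (R := K))⟩ :
    F4 →ₐ[ZMod 2] K)

theorem embedding_omega (hω : ω ^ 2 + ω + 1 = 0) : embedding hω .omega = ω := by
  let _ : Algebra (ZMod 2) K := ZMod.algebra K 2
  simp [embedding]

end F4

/-- The type 6¹ arrangement over a characteristic-2 field containing a primitive
cube root of unity ω: the six normals are in general position (any three linearly
independent) and all 15 collinearity conditions hold, i.e. for every partition of
{1,...,6} into three pairs (given by a permutation) the corresponding determinant
vanishes. -/
theorem stmt15 {K : Type*} [Field K] (h2 : (2 : K) = 0) (ω : K)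
    (hω : ω ^ 2 + ω + 1 = 0)
    (α : Fin 6 → Fin 3 → K)
    (hα : α = ![![1, 0, 0], ![0, 1, 0], ![0, 0, 1], ![1, 1, 1],
      ![ω, ω ^ 2, 1], ![ω ^ 2, ω, 1]]) :
    (∀ i j k : Fin 6, i ≠ j → i ≠ k → j ≠ k → det3 (α i) (α j) (α k) ≠ 0) ∧
    (∀ p : Equiv.Perm (Fin 6),
      det3 (cross3 (α (p 0)) (α (p 1))) (cross3 (α (p 2)) (α (p 3)))
        (cross3 (α (p 4)) (α (p 5))) = 0) := by
  have : CharP K 2 := CharTwo.of_one_ne_zero_of_two_eq_zero one_ne_zero h2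
  set ι := F4.embedding hω
  have hαι : ∀ i, α i = ι ∘ hyperoval .omega i := fun i => by
    rw [ι.comp_hyperoval, F4.embedding_omega, hα]
    rfl
  refine ⟨fun i j k hij hik hjk => ?_, fun p => ?_⟩
  · rw [hαι, hαι, hαι, ← ι.map_det3]
    exact (map_ne_zero ι).2 (F4.det3_hyperoval_ne_zero i j k hij hik hjk)
  · simp only [hαι, ← ι.comp_cross3, ← ι.map_det3]
    rw [F4.det3_cross3_hyperoval_eq_zero p.injective, map_zero]
end
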